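/- arXiv:1504.02075 — 3 statements merged into one kernel-verified Lean document; each statement's English description precedes it below -/
import Mathlib

section
/- Let m, n be coprime positive integers. For any (m,n)-Dyck path D, dinv(D) = dinv(D^T), where D^T is the transpose path in the n×m rectangle. -/
open Nat

/-- Number of north steps among the first `i` steps of the path `P`
(`true` = north step `N`, `false` = east step `E`). -/
def nSteps (P : List Bool) (i : ℕ) : ℕ := (P.take i).count true

/-- Number of east steps among the first `i` steps. -/
def eSteps (P : List Bool) (i : ℕ) : ℕ := (P.take i).count false

/-- Rank `m*b - n*a` of the `i`-th lattice point `(a,b)` of the path. -/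
def rank (m n : ℕ) (P : List Bool) (i : ℕ) : ℤ :=
  (m : ℤ) * nSteps P i - (n : ℤ) * eSteps P i

/-- A lattice path from `(0,0)` to `(m,n)`: `m+n` unit steps, `n` of them north. -/
def IsPath (m n : ℕ) (P : List Bool) : Prop :=
  P.length = m + n ∧ P.count true = n

/-- An `(m,n)`-Dyck path: a path staying weakly above the diagonal,
equivalently with all ranks nonnegative. -/
def IsDyck (m n : ℕ) (P : List Bool) : Prop :=
  IsPath m n P ∧ ∀ i ≤ m + n, 0 ≤ rank m n P i

/-- The set of ranks of the first `m+n` lattice points of the path. -/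
def rankSet (m n : ℕ) (P : List Bool) : Finset ℤ :=
  (Finset.range (m + n)).image (rank m n P)

/-- Ranks of south ends (starting points of north steps). -/
def southRanks (m n : ℕ) (P : List Bool) : Finset ℤ :=
  ((Finset.range (m + n)).filter (fun i => P.getD i false = true)).image (rank m n P)

/-- Ranks of west ends (starting points of east steps). -/
def westRanks (m n : ℕ) (P : List Bool) : Finset ℤ :=
  ((Finset.range (m + n)).filter (fun i => P.getD i true = false)).image (rank m n P)

/-- Transpose of a path: reverse the word and exchange `N` and `E`. -/
def transpose (P : List Bool) : List Bool := (P.map (fun b => !b)).reverse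

/-- `D'` is the rank complement of `D`: its rank set is `M - r(D)`
where `M` is the maximum rank of `D`. -/
def IsRankComplement (m n : ℕ) (D D' : List Bool) : Prop :=
  ∃ M : ℤ, IsGreatest (↑(rankSet m n D) : Set ℤ) M ∧
    rankSet m n D' = (rankSet m n D).image (fun r => M - r)

/-- A partition, encoded as a weakly decreasing list of positive integers. -/
def IsPartition (L : List ℕ) : Prop :=
  L.Pairwise (· ≥ ·) ∧ ∀ x ∈ L, 0 < x

/-- Hook length of the cell in (0-based) row `i`, column `j`. -/
def hook (L : List ℕ) (i j : ℕ) : ℕ :=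
  L.getD i 0 - j + (L.drop (i + 1)).countP (fun x => decide (j < x))

/-- `L` is an `n`-core: no hook length is divisible by `n`. -/
def IsCore (n : ℕ) (L : List ℕ) : Prop :=
  ∀ i < L.length, ∀ j < L.getD i 0, ¬ (n ∣ hook L i j)

/-- The set of first-column hook lengths of `L`. -/
def firstColHooks (L : List ℕ) : Finset ℕ :=
  (Finset.range L.length).image (fun i => hook L i 0)

/-- Conjugate (transpose) partition. -/
def conjugate (L : List ℕ) : List ℕ :=
  (List.range (L.getD 0 0)).map (fun j => L.countP (fun x => decide (j < x)))

/-- `H` is `n`-flush: no element is a multiple of `n`, and it is closed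
under subtracting `n` while staying positive. -/
def IsFlush (n : ℕ) (H : Finset ℕ) : Prop :=
  (∀ h ∈ H, ¬ (n ∣ h)) ∧ ∀ h ∈ H, n < h → h - n ∈ H

/-- `s_i^n(H)`: the maximum of `((n+H) ∪ {i}) ∩ (i + nℤ)`. -/
def sFun (n : ℕ) (H : Finset ℕ) (i : ℕ) : ℕ :=
  (insert i ((H.filter (fun h => h % n = i % n)).image (fun h => h + n))).max'
    (Finset.insert_nonempty _ _)

/-- `S^n(H) = {s_0, ..., s_{n-1}}`. -/
def sSet (n : ℕ) (H : Finset ℕ) : Finset ℕ := (Finset.range n).image (sFun n H)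

/-- The lattice point `(a,b)` lies strictly to the right of the path `D`
inside the `m × n` rectangle: every lattice point of `D` at height `b`
has `x`-coordinate less than `a`. -/
def StrictlyRightOf (m n : ℕ) (D : List Bool) (a b : ℕ) : Prop :=
  a ≤ m ∧ b ≤ n ∧ ∀ i ≤ m + n, (D.take i).count true = b → (D.take i).count false < a

/-- The positive ranks of lattice points lying strictly to the right of `D`. -/
def andersonSet (m n : ℕ) (D : List Bool) : Set ℕ :=
  {h | 0 < h ∧ ∃ a b : ℕ, StrictlyRightOf m n D a b ∧ (h : ℤ) = (m : ℤ) * b - (n : ℤ) * a}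

/-- The `x`-coordinate of the vertical step of `D` at height `y`
(the number of east steps taken at heights `≤ y`). -/
def southX (D : List Bool) (y : ℕ) : ℕ :=
  (List.range D.length).countP
    (fun i => decide (D.getD i true = false ∧ (D.take i).count true ≤ y))

/-- The partition formed by the cells above the path `D`
inside a rectangle of height `n`. -/
def pathPartition (n : ℕ) (D : List Bool) : List ℕ :=
  (((List.range n).reverse).map (fun y => southX D y)).filter (fun x => decide (0 < x))

/-- Arm of the cell `(i,j)` of `L`. -/
def armL (L : List ℕ) (i j : ℕ) : ℕ := L.getD i 0 - (j + 1)

/-- Leg of the cell `(i,j)` of `L`. -/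
def legL (L : List ℕ) (i j : ℕ) : ℕ := (L.drop (i + 1)).countP (fun x => decide (j < x))

/-- The dinv statistic of an `(m,n)`-Dyck path: the number of cells `c` of the
partition above the path with `arm(c)/(leg(c)+1) ≤ m/n < (arm(c)+1)/leg(c)`. -/
def dinv (m n : ℕ) (D : List Bool) : ℕ :=
  ((Finset.range (pathPartition n D).length ×ˢ Finset.range m).filter
    (fun p => p.2 < (pathPartition n D).getD p.1 0 ∧
      armL (pathPartition n D) p.1 p.2 * n ≤ m * (legL (pathPartition n D) p.1 p.2 + 1) ∧
      m * legL (pathPartition n D) p.1 p.2 < n * (armL (pathPartition n D) p.1 p.2 + 1))).card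

/-- `codinv(D) = #{(r_s, r_w) : r_s ∈ S(D), r_w ∈ W(D), r_s < r_w}`. -/
def codinv (m n : ℕ) (D : List Bool) : ℕ :=
  ((southRanks m n D ×ˢ westRanks m n D).filter (fun p => p.1 < p.2)).card

/-- The skew length of an `(m,n)`-core: the number of cells lying both in an
`n`-row (a row `i` with `h_i + n ∈ S^n(H_λ)`) and in the `m`-boundary
(hook length `< m`). -/
def skewLength (m n : ℕ) (L : List ℕ) : ℕ :=
  ((Finset.range L.length ×ˢ Finset.range (L.headD 0)).filter
    (fun p => p.2 < L.getD p.1 0 ∧ hook L p.1 p.2 < m ∧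
      hook L p.1 0 + n ∈ sSet n (firstColHooks L))).card

/-!
The partition of `Dᵀ` is the conjugate of `λ(D)`: row `j` of `λ(Dᵀ)`, counted from the top, has
length `n - southX (D.map (!·)) j`, which is the length of column `j` of `λ(D)` because
`southX (D.map (!·)) j` is the height of the `j`-th east step of `D`. Conjugation exchanges arm
and leg, so `dinv(Dᵀ)` counts the cells of `λ(D)` satisfying the condition with `(m, n)` and
`(arm, leg)` both swapped. For `arm < m` and `leg < n`, coprimality excludes the equalities
`arm * n = m * (leg + 1)` and `leg * m = n * (arm + 1)`, so the weak and the strict inequality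
of the condition may trade places and the two conditions agree.
-/
section Lists

open List

theorem countP_range_lt (K a : ℕ) : (range K).countP (fun j => decide (j < a)) = min K a := by
  induction K with
  | zero => simp
  | succ K ih =>
    rw [range_succ, countP_append, ih, countP_singleton]
    split_ifs with h <;> simp only [decide_eq_true_eq] at h <;> omega

theorem countP_range_le (n a : ℕ) : (range n).countP (fun y => decide (a ≤ y)) = n - a := by
  induction n with
  | zero => simp
  | succ n ih =>
    rw [range_succ, countP_append, ih, countP_singleton]
    split_ifs with h <;> simp only [decide_eq_true_eq] at h <;> omega

theorem range_filter_lt {K m : ℕ} (h : K ≤ m) :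
    (range m).filter (fun j => decide (j < K)) = range K := by
  obtain ⟨d, rfl⟩ := Nat.exists_eq_add_of_le h
  rw [range_add, filter_append, filter_eq_self.2 (by simp), filter_eq_nil_iff.2 (by simp)]
  simp

@[simp] theorem count_map_not (D : List Bool) (b : Bool) :
    (D.map (!·)).count b = D.count (!b) := by
  simpa using count_map_of_injective D (!·) Bool.not_injective (!b)

theorem getD_le_of_forall_le {L : List ℕ} {m : ℕ} (hL : ∀ x ∈ L, x ≤ m) (i : ℕ) :
    L.getD i 0 ≤ m := by
  rcases lt_or_ge i L.length with hi | hi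
  · rw [getD_eq_getElem _ _ hi]; exact hL _ (getElem_mem hi)
  · rw [getD_eq_default _ _ hi]; exact Nat.zero_le _

theorem lt_length_of_lt_getD {L : List ℕ} {i j : ℕ} (h : j < L.getD i 0) : i < L.length := by
  by_contra hi
  rw [getD_eq_default _ _ (not_lt.1 hi)] at h
  exact Nat.not_lt_zero _ h

theorem countP_lt_eq_zero_of_le {L : List ℕ} {a j : ℕ} (hL : ∀ x ∈ L, x ≤ a)
    (hj : a ≤ j) :
    L.countP (fun x => decide (j < x)) = 0 :=
  countP_eq_zero.2 fun x hx => by simpa using (hL x hx).trans hj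

theorem lt_countP_lt_iff {L : List ℕ} (hL : L.Pairwise (· ≥ ·)) (i j : ℕ) :
    i < L.countP (fun x => decide (j < x)) ↔ j < L.getD i 0 := by
  induction L generalizing i with
  | nil => simp
  | cons a L ih =>
    rw [pairwise_cons] at hL
    by_cases hja : j < a
    · rcases i with _ | i
      · simp [hja]
      · simp [hja, ih hL.2]
    · rw [countP_lt_eq_zero_of_le (a := a) (by simpa using hL.1) (by omega)]
      rcases i with _ | i
      · simp [hja]
      · simp only [getD_cons_succ, Nat.not_lt_zero, false_iff, not_lt]
        rcases lt_or_ge i L.length with hi | hi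
        · rw [getD_eq_getElem _ _ hi]; have := hL.1 _ (getElem_mem hi); omega
        · rw [getD_eq_default _ _ hi]; omega

theorem countP_lt_drop {L : List ℕ} (hL : L.Pairwise (· ≥ ·)) (k j : ℕ) :
    (L.drop k).countP (fun x => decide (j < x)) = L.countP (fun x => decide (j < x)) - k := by
  induction L generalizing k with
  | nil => simp
  | cons a L ih =>
    rw [pairwise_cons] at hL
    rcases k with _ | k
    · simp
    · rw [drop_succ_cons, ih hL.2]
      by_cases hja : j < a
      · simp [hja]
      · rw [countP_lt_eq_zero_of_le (a := a) (by simpa using hL.1) (by omega),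
          countP_lt_eq_zero_of_le (a := a) (by simpa using hL.1) (by omega), Nat.zero_sub,
          Nat.zero_sub]

theorem getD_conjugate {L : List ℕ} (hL : L.Pairwise (· ≥ ·)) (j : ℕ) :
    (conjugate L).getD j 0 = L.countP (fun x => decide (j < x)) := by
  rcases lt_or_ge j (L.getD 0 0) with hj | hj
  · rw [getD_eq_getElem _ _ (by simpa [conjugate] using hj)]
    simp [conjugate]
  · rw [getD_eq_default _ _ (by simpa [conjugate] using hj)]
    have := (lt_countP_lt_iff hL 0 j).not.2 (by omega)
    omega

theorem conjugate_pairwise (L : List ℕ) : (conjugate L).Pairwise (· ≥ ·) := by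
  refine pairwise_lt_range.map _ fun a b hab => countP_mono_left fun x _ h => ?_
  simp only [decide_eq_true_eq] at h ⊢; omega

theorem getD_le_getD_zero {L : List ℕ} (hL : L.Pairwise (· ≥ ·)) (i : ℕ) :
    L.getD i 0 ≤ L.getD 0 0 := by
  rcases L with _ | ⟨a, L⟩
  · simp
  · refine getD_le_of_forall_le (fun x hx => ?_) i
    rcases mem_cons.1 hx with rfl | hx
    exacts [le_rfl, (pairwise_cons.1 hL).1 x hx]

theorem countP_conjugate {L : List ℕ} (hL : L.Pairwise (· ≥ ·)) (i : ℕ) :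
    (conjugate L).countP (fun x => decide (i < x)) = L.getD i 0 := by
  have hc : (fun j => decide (i < L.countP (fun x => decide (j < x)))) =
      fun j => decide (j < L.getD i 0) := by
    funext j; simp only [lt_countP_lt_iff hL]
  rw [conjugate, countP_map, Function.comp_def, hc, countP_range_lt]
  exact min_eq_right (getD_le_getD_zero hL i)

theorem armL_conjugate {L : List ℕ} (hL : L.Pairwise (· ≥ ·)) (i j : ℕ) :
    armL (conjugate L) j i = legL L i j := by
  rw [armL, legL, getD_conjugate hL, countP_lt_drop hL]

theorem legL_conjugate {L : List ℕ} (hL : L.Pairwise (· ≥ ·)) (i j : ℕ) :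
    legL (conjugate L) j i = armL L i j := by
  rw [armL, legL, countP_lt_drop (conjugate_pairwise L), countP_conjugate hL]

end Lists

section Cells

open Finset

def cells (L : List ℕ) : Finset (ℕ × ℕ) :=
  (range L.length).biUnion fun i => {i} ×ˢ range (L.getD i 0)

theorem mem_cells {L : List ℕ} {c : ℕ × ℕ} : c ∈ cells L ↔ c.2 < L.getD c.1 0 := by
  simp only [cells, mem_biUnion, mem_product, mem_singleton, mem_range]
  exact ⟨fun ⟨_, _, hi, hj⟩ => hi ▸ hj, fun h => ⟨c.1, lt_length_of_lt_getD h, rfl, h⟩⟩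

theorem cells_conjugate {L : List ℕ} (hL : L.Pairwise (· ≥ ·)) :
    cells (conjugate L) = (cells L).map (Equiv.prodComm ℕ ℕ).toEmbedding := by
  ext c
  rw [mem_map_equiv, mem_cells, mem_cells, getD_conjugate hL]
  exact lt_countP_lt_iff hL _ _

theorem card_filter_cells_conjugate {L : List ℕ} (hL : L.Pairwise (· ≥ ·))
    (P : ℕ → ℕ → Prop) [DecidableRel P] :
    #{c ∈ cells (conjugate L) | P (armL (conjugate L) c.1 c.2) (legL (conjugate L) c.1 c.2)} =
      #{c ∈ cells L | P (legL L c.1 c.2) (armL L c.1 c.2)} := by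
  rw [cells_conjugate hL, filter_map, card_map]
  simp [armL_conjugate hL, legL_conjugate hL]

theorem filter_range_prod_eq_filter_cells {L : List ℕ} {m : ℕ} (hL : ∀ x ∈ L, x ≤ m)
    (Q : ℕ × ℕ → Prop) [DecidablePred Q] :
    {c ∈ range L.length ×ˢ range m | c.2 < L.getD c.1 0 ∧ Q c} = {c ∈ cells L | Q c} := by
  ext c
  simp only [mem_filter, mem_product, mem_range, mem_cells]
  exact ⟨fun h => h.2, fun ⟨hc, hQ⟩ =>
    ⟨⟨lt_length_of_lt_getD hc, hc.trans_le (getD_le_of_forall_le hL _)⟩, hc, hQ⟩⟩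

theorem armL_lt_of_mem_cells {L : List ℕ} {c : ℕ × ℕ} (hc : c ∈ cells L) :
    armL L c.1 c.2 < L.getD c.1 0 := by
  rw [mem_cells] at hc
  rw [armL]
  omega

theorem legL_lt_length_of_mem_cells {L : List ℕ} {c : ℕ × ℕ} (hc : c ∈ cells L) :
    legL L c.1 c.2 < L.length := by
  have hi := lt_length_of_lt_getD (mem_cells.1 hc)
  have := (L.drop (c.1 + 1)).countP_le_length (p := fun x => decide (c.2 < x))
  rw [List.length_drop] at this
  rw [legL]
  omega

end Cells

section Paths

open List

@[simp] theorem southX_nil (y : ℕ) : southX [] y = 0 := rfl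

theorem southX_cons (b : Bool) (D : List Bool) (y : ℕ) :
    southX (b :: D) y =
      if b then (if y = 0 then 0 else southX D (y - 1)) else southX D y + 1 := by
  simp only [southX, length_cons, range_succ_eq_map, countP_cons, countP_map]
  cases b <;> rcases y with _ | y <;> simp [Function.comp_def]

@[simp] theorem southX_false_cons (D : List Bool) (y : ℕ) :
    southX (false :: D) y = southX D y + 1 := by
  simp [southX_cons]

@[simp] theorem southX_true_cons_zero (D : List Bool) : southX (true :: D) 0 = 0 := by
  simp [southX_cons]

@[simp] theorem southX_true_cons_succ (D : List Bool) (y : ℕ) :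
    southX (true :: D) (y + 1) = southX D y := by
  simp [southX_cons]

theorem southX_le_count_false (D : List Bool) (y : ℕ) : southX D y ≤ D.count false := by
  induction D generalizing y with
  | nil => simp
  | cons b D ih => cases b <;> rcases y with _ | y <;> simp [ih]

theorem southX_mono (D : List Bool) : Monotone (southX D) := by
  induction D with
  | nil => exact fun _ _ _ => le_rfl
  | cons b D ih =>
    intro y z hyz
    cases b
    · simpa using ih hyz
    · rcases y with _ | y
      · simp
      · obtain ⟨z, rfl⟩ : ∃ z', z = z' + 1 := ⟨z - 1, by omega⟩
        simpa using ih (by omega : y ≤ z)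

theorem southX_append (D₁ D₂ : List Bool) (y : ℕ) :
    southX (D₁ ++ D₂) y = if D₁.count true ≤ y
      then D₁.count false + southX D₂ (y - D₁.count true) else southX D₁ y := by
  induction D₁ generalizing y with
  | nil => simp
  | cons b D₁ ih =>
    cases b
    · rw [cons_append, southX_false_cons, ih, count_cons_of_ne (by decide), count_cons_self,
        southX_false_cons]
      split_ifs <;> omega
    · rcases y with _ | y
      · simp
      · simp [ih, Nat.add_sub_add_right]

theorem lt_southX_iff {D : List Bool} {j : ℕ} (hj : j < D.count false) (y : ℕ) :
    j < southX D y ↔ southX (D.map (!·)) j ≤ y := by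
  induction D generalizing j y with
  | nil => simp at hj
  | cons b D ih =>
    cases b
    · rcases j with _ | j
      · simp
      · rw [count_cons_self] at hj
        rw [southX_false_cons, map_cons, Bool.not_false, southX_true_cons_succ,
          Nat.add_lt_add_iff_right]
        exact ih (by omega) y
    · rcases y with _ | y
      · simp
      · rw [count_cons_of_ne (by decide)] at hj
        rw [southX_true_cons_succ, map_cons, Bool.not_true, southX_false_cons,
          Nat.add_le_add_iff_right]
        exact ih hj y

theorem southX_reverse_add {D : List Bool} {y z : ℕ} (h : y + z + 1 = D.count true) :
    southX D.reverse y + southX D z = D.count false := by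
  induction D generalizing y z with
  | nil => simp at h
  | cons b D ih =>
    cases b
    · rw [count_cons_of_ne (by decide)] at h
      rw [reverse_cons, southX_append, count_reverse, if_neg (by omega), southX_false_cons,
        count_cons_self, ← ih h]
      omega
    · rw [count_cons_self] at h
      rcases z with _ | z
      · rw [reverse_cons, southX_append, count_reverse, if_pos (by omega), count_reverse,
          show y - D.count true = 0 by omega, southX_true_cons_zero, southX_true_cons_zero,
          count_cons_of_ne (by decide), add_zero, add_zero]
      · rw [reverse_cons, southX_append, count_reverse, if_neg (by omega), southX_true_cons_succ,
          count_cons_of_ne (by decide), ih (by omega)]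

theorem southX_transpose_add {D : List Bool} {y : ℕ} (hy : y < D.count false) :
    southX (transpose D) y + southX (D.map (!·)) (D.count false - 1 - y) = D.count true := by
  have h : y + (D.count false - 1 - y) + 1 = (D.map (!·)).count true := by
    rw [count_map_not, Bool.not_true]; omega
  have := southX_reverse_add h
  rwa [count_map_not, Bool.not_false] at this

theorem IsPath.count_false {m n : ℕ} {D : List Bool} (hD : IsPath m n D) : D.count false = m := by
  have := count_not_add_count D true
  simp only [Bool.not_true] at this
  obtain ⟨hlen, htrue⟩ := hD
  omega

theorem pathPartition_pairwise (n : ℕ) (D : List Bool) :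
    (pathPartition n D).Pairwise (· ≥ ·) := by
  have hrev : (range n).reverse.Pairwise (· > ·) := pairwise_reverse.2 pairwise_lt_range
  have hmap : ((range n).reverse.map (southX D)).Pairwise (· ≥ ·) :=
    hrev.map (southX D) fun _ _ h => southX_mono D h.le
  exact hmap.filter _

theorem le_count_false_of_mem_pathPartition {n : ℕ} {D : List Bool} {x : ℕ}
    (hx : x ∈ pathPartition n D) : x ≤ D.count false := by
  simp only [pathPartition, mem_filter, mem_map] at hx
  obtain ⟨⟨y, -, rfl⟩, -⟩ := hx
  exact southX_le_count_false D y

theorem length_pathPartition_le (n : ℕ) (D : List Bool) : (pathPartition n D).length ≤ n :=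
  (length_filter_le _ _).trans (by simp)

theorem countP_lt_pathPartition {m n : ℕ} {D : List Bool} (hD : IsPath m n D) {j : ℕ}
    (hj : j < m) :
    (pathPartition n D).countP (fun x => decide (j < x)) = n - southX (D.map (!·)) j := by
  have hj' : j < D.count false := hD.count_false ▸ hj
  rw [pathPartition, countP_filter, countP_map, countP_reverse, ← countP_range_le]
  congr 1
  funext y
  rw [Function.comp_apply, ← Bool.decide_and]
  exact decide_eq_decide.2 ⟨fun h => (lt_southX_iff hj' y).1 h.1,
    fun h => have := (lt_southX_iff hj' y).2 h; ⟨this, by omega⟩⟩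

theorem pathPartition_transpose {m n : ℕ} {D : List Bool} (hD : IsPath m n D) :
    pathPartition m (transpose D) = conjugate (pathPartition n D) := by
  set L := pathPartition n D
  have hL : L.Pairwise (· ≥ ·) := pathPartition_pairwise n D
  have hK : L.getD 0 0 ≤ m := getD_le_of_forall_le
    (fun x hx => hD.count_false ▸ le_count_false_of_mem_pathPartition hx) 0
  have hrow : ∀ j ∈ range m,
      southX (transpose D) (0 + m - 1 - j) = L.countP (fun x => decide (j < x)) := by
    intro j hj
    rw [mem_range] at hj
    have := southX_transpose_add (D := D) (y := m - 1 - j) (by rw [hD.count_false]; omega)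
    rw [hD.count_false, show m - 1 - (m - 1 - j) = j by omega, hD.2] at this
    rw [countP_lt_pathPartition hD hj, zero_add]
    omega
  calc pathPartition m (transpose D)
      = ((range m).map fun j => L.countP (fun x => decide (j < x))).filter
          (fun x => decide (0 < x)) := by
        rw [pathPartition, range_eq_range', reverse_range', map_map, ← range_eq_range']
        exact congrArg _ (map_congr_left hrow)
    _ = ((range m).filter fun j => decide (j < L.getD 0 0)).map
          fun j => L.countP (fun x => decide (j < x)) := by
        rw [filter_map]
        simp only [Function.comp_def, lt_countP_lt_iff hL]
    _ = conjugate L := by rw [range_filter_lt hK, conjugate]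

end Paths

theorem mul_ne_mul_add_one_of_coprime {m n a : ℕ} (hco : Nat.Coprime m n) (ha : a < m) (l : ℕ) :
    a * n ≠ m * (l + 1) := fun h => by
  obtain rfl : a = 0 := Nat.eq_zero_of_dvd_of_lt (hco.dvd_of_dvd_mul_right ⟨l + 1, h⟩) ha
  exact Nat.mul_ne_zero (by omega) l.succ_ne_zero (h.symm.trans (zero_mul n))

abbrev DinvCond (m n a l : ℕ) : Prop := a * n ≤ m * (l + 1) ∧ m * l < n * (a + 1)

theorem dinvCond_comm {m n a l : ℕ} (hco : Nat.Coprime m n) (ha : a < m) (hl : l < n) :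
    DinvCond m n a l ↔ DinvCond n m l a := by
  have e₁ : a * n ≤ m * (l + 1) ↔ n * a < m * (l + 1) := by
    rw [(mul_ne_mul_add_one_of_coprime hco ha l).le_iff_lt, mul_comm]
  have e₂ : m * l < n * (a + 1) ↔ l * m ≤ n * (a + 1) := by
    rw [(mul_ne_mul_add_one_of_coprime hco.symm hl a).le_iff_lt, mul_comm]
  rw [DinvCond, DinvCond, e₁, e₂, and_comm]

open Finset in
theorem dinv_eq_card_filter_cells {m n : ℕ} {D : List Bool}
    (hD : ∀ x ∈ pathPartition n D, x ≤ m) :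
    dinv m n D = #{c ∈ cells (pathPartition n D) |
      DinvCond m n (armL (pathPartition n D) c.1 c.2) (legL (pathPartition n D) c.1 c.2)} := by
  rw [dinv, ← filter_range_prod_eq_filter_cells hD]

theorem dinv_transpose_general (m n : ℕ) (hco : Nat.Coprime m n)
    (D : List Bool) (hD : IsDyck m n D) :
    dinv m n D = dinv n m (transpose D) := by
  have hpath : IsPath m n D := hD.1
  have hLm : ∀ x ∈ pathPartition n D, x ≤ m := fun x hx =>
    hpath.count_false ▸ le_count_false_of_mem_pathPartition hx
  have hTn : ∀ x ∈ pathPartition m (transpose D), x ≤ n := fun x hx => by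
    simpa [transpose, hpath.2] using le_count_false_of_mem_pathPartition hx
  rw [dinv_eq_card_filter_cells hLm, dinv_eq_card_filter_cells hTn, pathPartition_transpose hpath,
    card_filter_cells_conjugate (pathPartition_pairwise n D) (DinvCond n m)]
  refine congrArg _ (Finset.filter_congr fun c hc => dinvCond_comm hco ?_ ?_)
  · exact (armL_lt_of_mem_cells hc).trans_le (getD_le_of_forall_le hLm _)
  · exact (legL_lt_length_of_mem_cells hc).trans_le (length_pathPartition_le n D)

/-- For coprime positive `m, n` and any `(m,n)`-Dyck path `D`,
`dinv(D) = dinv(Dᵀ)` where `Dᵀ` is the transpose path in the `n × m` rectangle. -/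
theorem dinv_transpose (m n : ℕ) (hm : 0 < m) (hn : 0 < n) (hco : Nat.Coprime m n)
    (D : List Bool) (hD : IsDyck m n D) :
    dinv m n D = dinv n m (transpose D) :=
  dinv_transpose_general m n hco D hD
end

section
/- Let m, n be coprime positive integers. For any (m,n)-Dyck path D, codinv(D̄) = codinv(D), where D̄ is the rank complement of D; equivalently, the rank complement preserves the dinv statistic. -/
open Nat

/-!
Both sides are read off rank sets. The ranks of a coprime path are distinct modulo `m + n`,
so a rank `r` starts a north step iff `r + m` is a rank, and ends one iff `r - m` is. Reflecting
the rank set `R` to `M - R` exchanges starts and ends, which gives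
`codinv D̄ = #{(s, w) ∈ S × W | w - n < s + m}` for the south and west ranks `S`, `W` of `D`,
whereas `codinv D = #{(s, w) ∈ S × W | s < w}`.

These counts agree for every closed walk with steps `+m` and `-n`. With `f = ∑ T ^ s` and
`g = ∑ T ^ w`, closedness reads `f T^m + g T^(-n) = f + g`, and after cancelling `T^n - 1` this
says that `h = g · f(T⁻¹)`, the generating function of the differences `w - s`, satisfies
`h = T^(m+n) · h(T⁻¹)`: the differences are symmetric about `(m + n) / 2`, so as many of them are
positive as are smaller than `m + n`.
-/

open Finset LaurentPolynomial

theorem Nat.Coprime.add_pos {m n : ℕ} (hco : Nat.Coprime m n) : 0 < m + n :=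
  Nat.pos_of_ne_zero fun h => by simp_all

theorem T_sub_one_ne_zero {n : ℤ} (hn : n ≠ 0) : (T n - 1 : ℤ[T;T⁻¹]) ≠ 0 := by
  rw [sub_ne_zero, ← T_zero]
  exact fun h => hn ((AddMonoidAlgebra.single_left_inj one_ne_zero).mp h)

theorem mul_invert_eq_T_mul_invert {f g : ℤ[T;T⁻¹]} {m n : ℤ} (hn : n ≠ 0)
    (h : f * T m + g * T (-n) = f + g) :
    g * invert f = T (m + n) * invert (g * invert f) := by
  have hinv : invert f * T (-m) + invert g * T n = invert f + invert g := by
    simpa using congrArg invert h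
  have hTm : (T m * T (-m) : ℤ[T;T⁻¹]) = 1 := by rw [← T_add, add_neg_cancel, T_zero]
  have hTn : (T n * T (-n) : ℤ[T;T⁻¹]) = 1 := by rw [← T_add, add_neg_cancel, T_zero]
  rw [map_mul, involutive_invert, T_add]
  refine mul_right_cancel₀ (T_sub_one_ne_zero hn) ?_
  -- both sides times `T n - 1` equal `T n * f * invert f * (T m - 1)`
  linear_combination (-(invert f * T n)) * h - (T n * f * T m) * hinv + (T n * f * invert f) * hTm
    + (invert f * g) * hTn

noncomputable def posCoeffSum : ℤ[T;T⁻¹] →+ ℤ :=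
  (Finsupp.liftAddHom fun d => if 0 < d then AddMonoidHom.id ℤ else 0).comp
    AddMonoidAlgebra.coeffAddEquiv.toAddMonoidHom

theorem posCoeffSum_sum_T {ι : Type*} (s : Finset ι) (d : ι → ℤ) :
    posCoeffSum (∑ i ∈ s, T (d i)) = #{i ∈ s | 0 < d i} := by
  rw [map_sum, card_filter, Nat.cast_sum]
  refine sum_congr rfl fun i _ => ?_
  change Finsupp.liftAddHom _ (Finsupp.single (d i) 1) = _
  rw [Finsupp.liftAddHom_apply_single]
  split_ifs <;> rfl

theorem card_lt_eq_card_sub_lt_add (S W : Finset ℤ) {m n : ℤ} (hn : n ≠ 0)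
    (h : ∑ s ∈ S, (T (s + m) : ℤ[T;T⁻¹]) + ∑ w ∈ W, T (w - n) =
      ∑ s ∈ S, T s + ∑ w ∈ W, T w) :
    #{p ∈ S ×ˢ W | p.1 < p.2} = #{p ∈ S ×ˢ W | p.2 - n < p.1 + m} := by
  have hrel : (∑ s ∈ S, (T s : ℤ[T;T⁻¹])) * T m + (∑ w ∈ W, T w) * T (-n) =
      ∑ s ∈ S, T s + ∑ w ∈ W, T w := by
    simpa only [sum_mul, ← T_add, ← sub_eq_add_neg] using h
  have hF : (∑ w ∈ W, (T w : ℤ[T;T⁻¹])) * invert (∑ s ∈ S, T s) =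
      ∑ p ∈ S ×ˢ W, T (p.2 - p.1) := by
    rw [map_sum, sum_mul_sum, sum_comm, ← sum_product']
    simp only [invert_T, ← T_sub]
  have hsymm := mul_invert_eq_T_mul_invert hn hrel
  rw [hF, map_sum, mul_sum] at hsymm
  have hcount := congrArg posCoeffSum hsymm
  simp only [invert_T, ← T_add, posCoeffSum_sum_T] at hcount
  rw [Nat.cast_inj] at hcount
  convert hcount using 2 <;> refine filter_congr fun p _ => ?_ <;> omega

theorem mem_image_const_sub {R : Finset ℤ} {M a : ℤ} :
    a ∈ R.image (M - ·) ↔ M - a ∈ R := by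
  simp only [mem_image]
  constructor
  · rintro ⟨b, hb, rfl⟩
    rwa [sub_sub_cancel]
  · exact fun h => ⟨M - a, h, sub_sub_cancel M a⟩

theorem filter_add_mem_image_const_sub (R : Finset ℤ) (M c : ℤ) :
    (R.image (M - ·)).filter (· + c ∈ R.image (M - ·)) =
      (R.filter (· - c ∈ R)).image (M - ·) := by
  rw [filter_image]
  exact congrArg _ (filter_congr fun x _ => by
    rw [mem_image_const_sub, sub_add_eq_sub_sub, sub_sub_cancel])

theorem filter_add_notMem_image_const_sub (R : Finset ℤ) (M c : ℤ) :
    (R.image (M - ·)).filter (· + c ∉ R.image (M - ·)) =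
      (R.filter (· - c ∉ R)).image (M - ·) := by
  rw [filter_image]
  exact congrArg _ (filter_congr fun x _ => by
    rw [mem_image_const_sub, sub_add_eq_sub_sub, sub_sub_cancel])

theorem card_filter_image_product {α β γ δ : Type*} [DecidableEq β] [DecidableEq δ]
    {f : α → β} {g : γ → δ} (hf : Function.Injective f) (hg : Function.Injective g)
    (A : Finset α) (B : Finset γ) (q : β × δ → Prop) [DecidablePred q] :
    #{p ∈ A.image f ×ˢ B.image g | q p} = #{p ∈ A ×ˢ B | q (f p.1, g p.2)} := by
  rw [← prodMap_image_product, filter_image, card_image_of_injective _ (hf.prodMap hg)]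
  rfl

section Path

variable {m n : ℕ} {P : List Bool}

theorem getD_true_eq_false_iff {i : ℕ} (hi : i < P.length) :
    P.getD i true = false ↔ ¬P.getD i false = true := by
  rw [List.getD_eq_getElem _ _ hi, List.getD_eq_getElem _ _ hi]
  cases P[i] <;> simp

theorem rank_zero : rank m n P 0 = 0 := by
  simp [rank, nSteps, eSteps]

theorem rank_succ {i : ℕ} (hi : i < P.length) :
    rank m n P (i + 1) = rank m n P i + if P.getD i false = true then (m : ℤ) else -n := by
  have htake : P.take (i + 1) = P.take i ++ [P[i]] := List.take_succ_eq_append_getElem hi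
  rw [List.getD_eq_getElem _ _ hi]
  cases hb : P[i] <;> simp [rank, nSteps, eSteps, htake, hb] <;> ring

theorem rank_eq_of_le_length {i : ℕ} (hi : i ≤ P.length) :
    rank m n P i = m * i - (m + n) * eSteps P i := by
  have h : (i : ℤ) = (P.take i).count true + (P.take i).count false := by
    have := List.count_true_add_count_false (P.take i)
    rw [List.length_take_of_le hi] at this
    omega
  rw [rank, nSteps, eSteps, h]
  ring

theorem IsPath.rank_length (hP : IsPath m n P) : rank m n P (m + n) = 0 := by
  have h := List.count_true_add_count_false P
  rw [hP.1, hP.2] at h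
  have htake : P.take (m + n) = P := by rw [← hP.1, List.take_length]
  rw [rank, nSteps, eSteps, htake, hP.2, show P.count false = m by omega]
  ring

theorem IsPath.eq_of_dvd_rank_sub (hP : IsPath m n P) (hco : Nat.Coprime m n) {i j : ℕ}
    (hi : i < m + n) (hj : j < m + n) (h : (m + n : ℤ) ∣ rank m n P i - rank m n P j) :
    i = j := by
  have hcop : IsCoprime (m + n : ℤ) m := by
    simpa using (Nat.isCoprime_iff_coprime.mpr (Nat.coprime_self_add_left.mpr hco.symm))
  have hmul : (m + n : ℤ) ∣ m * ((i : ℤ) - j) := by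
    have key : (m : ℤ) * (i - j) =
        rank m n P i - rank m n P j + (m + n) * ((eSteps P i : ℤ) - eSteps P j) := by
      rw [rank_eq_of_le_length (by rw [hP.1]; omega), rank_eq_of_le_length (by rw [hP.1]; omega)]
      ring
    rw [key]
    exact dvd_add h (dvd_mul_right _ _)
  have := Int.eq_zero_of_dvd_of_natAbs_lt_natAbs (hcop.dvd_of_dvd_mul_left hmul) (by omega)
  omega

theorem IsPath.injOn_rank (hP : IsPath m n P) (hco : Nat.Coprime m n) :
    Set.InjOn (rank m n P) (range (m + n)) := fun i hi j hj h =>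
  hP.eq_of_dvd_rank_sub hco (mem_range.1 hi) (mem_range.1 hj) (by simp [h])

theorem IsPath.rankSet_eq_image_rank_succ (hP : IsPath m n P) (hmn : 0 < m + n) :
    rankSet m n P = (range (m + n)).image (fun i => rank m n P (i + 1)) := by
  have hstart : (range (m + n + 1)).image (rank m n P) = rankSet m n P := by
    rw [range_add_one, image_insert, hP.rank_length, ← rank_zero (m := m) (n := n) (P := P)]
    exact insert_eq_of_mem (mem_image_of_mem _ (mem_range.2 hmn))
  have hend : (range (m + n + 1)).image (rank m n P) =
      (range (m + n)).image (fun i => rank m n P (i + 1)) := by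
    rw [range_add_one', image_insert, map_eq_image, image_image]
    refine insert_eq_of_mem (mem_image.2 ⟨m + n - 1, mem_range.2 (by omega), ?_⟩)
    change rank m n P (m + n - 1 + 1) = rank m n P 0
    rw [Nat.sub_add_cancel hmn, hP.rank_length, rank_zero]
  rw [← hstart, hend]

theorem IsPath.rank_add_mem_rankSet_iff (hP : IsPath m n P) (hco : Nat.Coprime m n) {i : ℕ}
    (hi : i < m + n) : rank m n P i + m ∈ rankSet m n P ↔ P.getD i false = true := by
  rw [hP.rankSet_eq_image_rank_succ hco.add_pos, mem_image]
  constructor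
  · rintro ⟨k, hk, hrank⟩
    have hk := mem_range.1 hk
    rw [rank_succ (hP.1 ▸ hk)] at hrank
    obtain rfl : k = i := hP.eq_of_dvd_rank_sub hco hk hi <| by
      split_ifs at hrank
      exacts [⟨0, by linarith⟩, ⟨1, by linarith⟩]
    by_contra hN
    rw [if_neg hN] at hrank
    omega
  · intro hN
    exact ⟨i, mem_range.2 hi, by rw [rank_succ (hP.1 ▸ hi), if_pos hN]⟩

theorem IsPath.rank_succ_sub_mem_rankSet_iff (hP : IsPath m n P) (hco : Nat.Coprime m n) {i : ℕ}
    (hi : i < m + n) : rank m n P (i + 1) - m ∈ rankSet m n P ↔ P.getD i false = true := by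
  rw [rank_succ (hP.1 ▸ hi)]
  constructor
  · intro h
    obtain ⟨k, hk, hrank⟩ := mem_image.1 h
    have hk := mem_range.1 hk
    obtain rfl : k = i := hP.eq_of_dvd_rank_sub hco hk hi <| by
      split_ifs at hrank
      exacts [⟨0, by linarith⟩, ⟨-1, by linarith⟩]
    by_contra hN
    rw [if_neg hN] at hrank
    have hmn := hco.add_pos
    omega
  · intro hN
    rw [if_pos hN, add_sub_cancel_right]
    exact mem_image_of_mem _ (mem_range.2 hi)

theorem IsPath.southRanks_eq_filter (hP : IsPath m n P) (hco : Nat.Coprime m n) :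
    southRanks m n P = (rankSet m n P).filter (· + (m : ℤ) ∈ rankSet m n P) := by
  change _ = filter _ ((range (m + n)).image (rank m n P))
  rw [filter_image, southRanks]
  exact congrArg _ (filter_congr fun i hi =>
    (hP.rank_add_mem_rankSet_iff hco (mem_range.1 hi)).symm)

theorem IsPath.westRanks_eq_filter (hP : IsPath m n P) (hco : Nat.Coprime m n) :
    westRanks m n P = (rankSet m n P).filter (· + (m : ℤ) ∉ rankSet m n P) := by
  change _ = filter _ ((range (m + n)).image (rank m n P))
  rw [filter_image, westRanks]
  refine congrArg _ (filter_congr fun i hi => ?_)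
  have hi := mem_range.1 hi
  rw [getD_true_eq_false_iff (hP.1 ▸ hi), hP.rank_add_mem_rankSet_iff hco hi]

theorem IsPath.filter_sub_mem_rankSet (hP : IsPath m n P) (hco : Nat.Coprime m n) :
    (rankSet m n P).filter (· - (m : ℤ) ∈ rankSet m n P) =
      (southRanks m n P).image (· + (m : ℤ)) := by
  refine (congrArg (filter _) (hP.rankSet_eq_image_rank_succ hco.add_pos)).trans ?_
  rw [filter_image, southRanks, image_image]
  refine (congrArg _ (filter_congr fun i hi =>
    hP.rank_succ_sub_mem_rankSet_iff hco (mem_range.1 hi))).trans (image_congr fun i hi => ?_)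
  obtain ⟨hi, hN⟩ := mem_filter.1 hi
  simp only [Function.comp_apply, rank_succ (hP.1 ▸ mem_range.1 hi), if_pos hN]

theorem IsPath.filter_sub_notMem_rankSet (hP : IsPath m n P) (hco : Nat.Coprime m n) :
    (rankSet m n P).filter (· - (m : ℤ) ∉ rankSet m n P) =
      (westRanks m n P).image (· - (n : ℤ)) := by
  refine (congrArg (filter _) (hP.rankSet_eq_image_rank_succ hco.add_pos)).trans ?_
  rw [filter_image, westRanks, image_image]
  refine (congrArg _ (filter_congr fun i hi => ?_)).trans (image_congr fun i hi => ?_)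
  · have hi := mem_range.1 hi
    rw [getD_true_eq_false_iff (hP.1 ▸ hi), hP.rank_succ_sub_mem_rankSet_iff hco hi]
  · obtain ⟨hi, hE⟩ := mem_filter.1 hi
    have hi := mem_range.1 hi
    rw [getD_true_eq_false_iff (hP.1 ▸ hi)] at hE
    simp only [Function.comp_apply, rank_succ (hP.1 ▸ hi), if_neg hE, sub_eq_add_neg]

theorem IsPath.sum_T_ends_eq_sum_T_starts (hP : IsPath m n P) (hco : Nat.Coprime m n) :
    ∑ s ∈ southRanks m n P, (T (s + m) : ℤ[T;T⁻¹]) + ∑ w ∈ westRanks m n P, T (w - n) =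
      ∑ s ∈ southRanks m n P, T s + ∑ w ∈ westRanks m n P, T w := by
  have hclosed : ∑ i ∈ range (m + n), (T (rank m n P (i + 1)) : ℤ[T;T⁻¹]) =
      ∑ i ∈ range (m + n), T (rank m n P i) := by
    have h := sum_range_succ' (fun i => (T (rank m n P i) : ℤ[T;T⁻¹])) (m + n)
    rwa [sum_range_succ, hP.rank_length, ← rank_zero (m := m) (n := n) (P := P),
      add_left_inj, eq_comm] at h
  have hwest : (range (m + n)).filter (fun i => P.getD i true = false) =
      (range (m + n)).filter (fun i => ¬P.getD i false = true) :=
    filter_congr fun i hi => getD_true_eq_false_iff (hP.1 ▸ mem_range.1 hi)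
  have hinj (p : ℕ → Prop) [DecidablePred p] :
      Set.InjOn (rank m n P) ((range (m + n)).filter p) :=
    (hP.injOn_rank hco).mono (filter_subset _ _)
  rw [southRanks, westRanks, hwest, sum_image (hinj _), sum_image (hinj _), sum_image (hinj _),
    sum_image (hinj _), sum_filter_add_sum_filter_not, ← hclosed,
    ← sum_filter_add_sum_filter_not (range (m + n)) (fun i => P.getD i false = true)]
  congr 1 <;> refine sum_congr rfl fun i hi => ?_ <;> obtain ⟨hi, hN⟩ := mem_filter.1 hi
  · rw [rank_succ (hP.1 ▸ mem_range.1 hi), if_pos hN]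
  · rw [rank_succ (hP.1 ▸ mem_range.1 hi), if_neg hN, sub_eq_add_neg]

end Path

theorem codinv_rank_complement_general (m n : ℕ) (hn : 0 < n)
    (hco : Nat.Coprime m n) (D D' : List Bool)
    (hD : IsDyck m n D) (hD' : IsDyck m n D')
    (hcomp : IsRankComplement m n D D') :
    codinv m n D' = codinv m n D := by
  obtain ⟨M, -, hM⟩ := hcomp
  calc codinv m n D'
      = #{p ∈ southRanks m n D ×ˢ westRanks m n D | p.2 - (n : ℤ) < p.1 + m} := by
        rw [codinv, hD'.1.southRanks_eq_filter hco, hD'.1.westRanks_eq_filter hco, hM,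
          filter_add_mem_image_const_sub, filter_add_notMem_image_const_sub,
          hD.1.filter_sub_mem_rankSet hco, hD.1.filter_sub_notMem_rankSet hco,
          image_image, image_image,
          card_filter_image_product (sub_right_injective.comp (add_left_injective _))
            (sub_right_injective.comp sub_left_injective)]
        exact congrArg card (filter_congr fun p _ => sub_lt_sub_iff_left M)
    _ = codinv m n D :=
        (card_lt_eq_card_sub_lt_add _ _ (by omega) (hD.1.sum_T_ends_eq_sum_T_starts hco)).symm

/-- The rank complement preserves the (co)dinv statistic:
`codinv(D̄) = codinv(D)` for every `(m,n)`-Dyck path `D`. -/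
theorem codinv_rank_complement (m n : ℕ) (hm : 0 < m) (hn : 0 < n)
    (hco : Nat.Coprime m n) (D D' : List Bool)
    (hD : IsDyck m n D) (hD' : IsDyck m n D')
    (hcomp : IsRankComplement m n D D') :
    codinv m n D' = codinv m n D :=
  codinv_rank_complement_general m n hn hco D D' hD hD' hcomp
end

section
/- Let m, n be coprime positive integers and let λ be an (m,n)-core with first-column hook lengths H = {h_1 > ... > h_a}. For each i, the number of cells in row i of λ with hook length less than m equals the number of elements of S^m(H) that are smaller than h_i, where S^m(H) = {s_0,...,s_{m-1}} and s_j is the largest element of (m + H) ∪ {j} congruent to j mod m. -/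
open Nat

/-! The hook lengths of row `i` are the numbers `hook L i 0 - g`, where `g` runs over the
non-elements of `H = firstColHooks L` below `hook L i 0`. Hence the cells of row `i` with hook
length `< m` correspond to the non-elements of `H` in the window `(h_i - m, h_i)`. When `H` is
`m`-flush, `s_r` is the least non-element of `H` in the residue class `r`, and all larger
members of that class are non-elements too; so the window contains a non-element of class `r`
exactly when `s_r < h_i`, and then only one. The bijection is `g ↦ s_{g mod m}`. -/

open Finset

theorem List.countP_drop_eq_card_filter {α : Type*} (l : List α) (p : α → Bool) (a : α)
    (d : ℕ) : (l.drop d).countP p = #{k ∈ Finset.Ico d l.length | p (l.getD k a)} := by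
  by_cases hd : d < l.length
  · rw [List.drop_eq_getElem_cons hd, List.countP_cons, l.countP_drop_eq_card_filter p a (d + 1),
      ← insert_Ico_add_one_left_eq_Ico hd, filter_insert, List.getD_eq_getElem _ _ hd]
    split <;> simp
  · rw [List.drop_of_length_le (by omega), Finset.Ico_eq_empty (by omega)]
    rfl
termination_by l.length - d

theorem hook_eq_card (L : List ℕ) (i j : ℕ) :
    hook L i j = L.getD i 0 - j + #{k ∈ Ioo i L.length | j < L.getD k 0} := by
  rw [hook, List.countP_drop_eq_card_filter _ _ 0, Ico_add_one_left_eq_Ioo]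
  simp

namespace IsPartition

variable {L : List ℕ}

theorem antitone_getD (hL : IsPartition L) : Antitone (L.getD · 0) := by
  intro a b hab
  by_cases hb : b < L.length
  · simp only [List.getD_eq_getElem _ _ hb, List.getD_eq_getElem _ _ (hab.trans_lt hb)]
    rcases hab.lt_or_eq with h | rfl
    · exact List.pairwise_iff_getElem.mp hL.1 a b _ hb h
    · rfl
  · simp only [List.getD_eq_default _ _ (not_lt.mp hb)]
    exact Nat.zero_le _

theorem getD_pos (hL : IsPartition L) {k : ℕ} (hk : k < L.length) : 0 < L.getD k 0 := by
  rw [List.getD_eq_getElem _ _ hk]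
  exact hL.2 _ (List.getElem_mem _)

end IsPartition

theorem hook_zero {L : List ℕ} (hL : IsPartition L) (t : ℕ) :
    hook L t 0 = L.getD t 0 + (L.length - t - 1) := by
  rw [hook_eq_card, Nat.sub_zero, ← Nat.card_Ioo, filter_true_of_mem]
  intro k hk
  exact hL.getD_pos (mem_Ioo.mp hk).2

theorem strictAntiOn_hook_zero {L : List ℕ} (hL : IsPartition L) :
    StrictAntiOn (hook L · 0) (Set.Iio L.length) := by
  intro t ht t' ht' htt'
  simp only [hook_zero hL]
  have : L.getD t' 0 ≤ L.getD t 0 := hL.antitone_getD htt'.le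
  simp only [Set.mem_Iio] at ht ht'
  omega

theorem mem_firstColHooks {L : List ℕ} {x : ℕ} :
    x ∈ firstColHooks L ↔ ∃ t < L.length, hook L t 0 = x := by
  simp [firstColHooks]

/-- For a cell `(i, j)` of a partition this equals `hook L i 0 - hook L i j`. -/
def coHook (L : List ℕ) (i j : ℕ) : ℕ :=
  j + #{k ∈ Ioo i L.length | L.getD k 0 ≤ j}

theorem coHook_strictMono (L : List ℕ) (i : ℕ) : StrictMono (coHook L i) := by
  intro j j' hjj'
  have : #{k ∈ Ioo i L.length | L.getD k 0 ≤ j} ≤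
      #{k ∈ Ioo i L.length | L.getD k 0 ≤ j'} :=
    card_le_card fun k hk => by
      rw [mem_filter] at hk ⊢
      exact ⟨hk.1, hk.2.trans hjj'.le⟩
  unfold coHook
  omega

theorem hook_add_coHook {L : List ℕ} (hL : IsPartition L) {i j : ℕ} (hj : j ≤ L.getD i 0) :
    hook L i j + coHook L i j = hook L i 0 := by
  have hsplit :=
    card_filter_add_card_filter_not (s := Ioo i L.length) (fun k => j < L.getD k 0)
  simp only [not_lt, Nat.card_Ioo] at hsplit
  rw [hook_eq_card, coHook, hook_zero hL]
  omega

theorem coHook_lt_hook_zero {L : List ℕ} (hL : IsPartition L) {i j : ℕ} (hj : j < L.getD i 0) :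
    coHook L i j < hook L i 0 := by
  have := hook_add_coHook hL hj.le
  rw [hook_eq_card] at this
  omega

theorem coHook_notMem_firstColHooks {L : List ℕ} (hL : IsPartition L) {i j : ℕ}
    (hi : i < L.length) (hj : j < L.getD i 0) : coHook L i j ∉ firstColHooks L := by
  intro hmem
  obtain ⟨t, ht, hteq⟩ := mem_firstColHooks.mp hmem
  have hlt := coHook_lt_hook_zero hL hj
  rcases le_or_gt t i with hti | hit
  · have := (strictAntiOn_hook_zero hL).antitoneOn ht hi hti
    omega
  rw [hook_zero hL, coHook] at hteq
  rcases le_or_gt (L.getD t 0) j with hjt | hjt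
  · have : L.length - t ≤ #{k ∈ Ioo i L.length | L.getD k 0 ≤ j} := by
      rw [← Nat.card_Ico]
      refine card_le_card fun k hk => ?_
      rw [mem_Ico] at hk
      rw [mem_filter, mem_Ioo]
      exact ⟨⟨hit.trans_le hk.1, hk.2⟩, (hL.antitone_getD hk.1).trans hjt⟩
    omega
  · have : #{k ∈ Ioo i L.length | L.getD k 0 ≤ j} ≤ L.length - t - 1 := by
      rw [← Nat.card_Ioo]
      refine card_le_card fun k hk => ?_
      rw [mem_filter, mem_Ioo] at hk
      refine mem_Ioo.mpr ⟨?_, hk.1.2⟩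
      by_contra! hkt
      exact (hk.2.trans_lt hjt).not_ge (hL.antitone_getD hkt)
    omega

theorem card_filter_mem_firstColHooks {L : List ℕ} (hL : IsPartition L) {i : ℕ}
    (hi : i < L.length) :
    #{x ∈ range (hook L i 0) | x ∈ firstColHooks L} = L.length - i - 1 := by
  have : {x ∈ range (hook L i 0) | x ∈ firstColHooks L} =
      (Ioo i L.length).image (hook L · 0) := by
    ext x
    simp only [mem_filter, mem_range, mem_firstColHooks, mem_image, mem_Ioo]
    constructor
    · rintro ⟨hx, t, ht, rfl⟩
      refine ⟨t, ⟨?_, ht⟩, rfl⟩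
      by_contra! hti
      exact hx.not_ge ((strictAntiOn_hook_zero hL).antitoneOn ht hi hti)
    · rintro ⟨t, ⟨hit, ht⟩, rfl⟩
      exact ⟨strictAntiOn_hook_zero hL hi ht hit, t, ht, rfl⟩
  rw [this, Finset.card_image_of_injOn, Nat.card_Ioo]
  exact (strictAntiOn_hook_zero hL).injOn.mono fun t ht => (mem_Ioo.mp ht).2

theorem image_coHook {L : List ℕ} (hL : IsPartition L) {i : ℕ} (hi : i < L.length) :
    (range (L.getD i 0)).image (coHook L i) =
      {g ∈ range (hook L i 0) | g ∉ firstColHooks L} := by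
  refine eq_of_subset_of_card_le ?_ ?_
  · intro g hg
    obtain ⟨j, hj, rfl⟩ := mem_image.mp hg
    rw [mem_range] at hj
    exact mem_filter.mpr ⟨mem_range.mpr (coHook_lt_hook_zero hL hj),
      coHook_notMem_firstColHooks hL hi hj⟩
  · have hsplit := card_filter_add_card_filter_not (s := range (hook L i 0))
      (· ∈ firstColHooks L)
    rw [card_filter_mem_firstColHooks hL hi, card_range] at hsplit
    have := hook_zero hL i
    rw [card_image_of_injective _ (coHook_strictMono L i).injective, card_range]
    omega

theorem isFlush_firstColHooks {m : ℕ} (hm : 0 < m) {L : List ℕ} (hL : IsPartition L)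
    (hc : IsCore m L) : IsFlush m (firstColHooks L) := by
  constructor
  · intro h hh
    obtain ⟨t, ht, rfl⟩ := mem_firstColHooks.mp hh
    exact hc t ht 0 (hL.getD_pos ht)
  · intro h hh hmh
    obtain ⟨t, ht, rfl⟩ := mem_firstColHooks.mp hh
    by_contra hgap
    have hmem : hook L t 0 - m ∈ {g ∈ range (hook L t 0) | g ∉ firstColHooks L} :=
      mem_filter.mpr ⟨mem_range.mpr (by omega), hgap⟩
    rw [← image_coHook hL ht] at hmem
    obtain ⟨j, hj, hjeq⟩ := mem_image.mp hmem
    rw [mem_range] at hj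
    have := hook_add_coHook hL hj.le
    exact hc t ht j hj ⟨1, by omega⟩

theorem Nat.exists_modEq_lt_le_add {m r h : ℕ} (hm : 0 < m) (hr : r < h) :
    ∃ g, g ≡ r [MOD m] ∧ g < h ∧ h ≤ g + m := by
  refine ⟨r + m * ((h - 1 - r) / m), Nat.add_mul_mod_self_left _ _ _, ?_⟩
  have := Nat.div_add_mod (h - 1 - r) m
  have := Nat.mod_lt (h - 1 - r) hm
  omega

section sFun

variable {m : ℕ} {H : Finset ℕ}

theorem sFun_mod {r : ℕ} (hr : r < m) : sFun m H r % m = r := by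
  obtain hmax | hmax := mem_insert.mp (max'_mem
    (insert r ({h ∈ H | h % m = r % m}.image (· + m))) (insert_nonempty _ _))
  · rw [sFun, hmax, Nat.mod_eq_of_lt hr]
  · obtain ⟨h, hh, hhmax⟩ := mem_image.mp hmax
    rw [sFun, ← hhmax, Nat.add_mod_right, (mem_filter.mp hh).2, Nat.mod_eq_of_lt hr]

theorem le_sFun (r : ℕ) : r ≤ sFun m H r :=
  le_max' _ _ (mem_insert_self _ _)

theorem add_le_sFun {r h : ℕ} (hh : h ∈ H) (hhr : h ≡ r [MOD m]) : h + m ≤ sFun m H r :=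
  le_max' _ _ (mem_insert_of_mem (mem_image_of_mem (· + m) (mem_filter.mpr ⟨hh, hhr⟩)))

end sFun

namespace IsFlush

variable {m : ℕ} {H : Finset ℕ}

theorem mem_of_modEq (hH : IsFlush m H) {x y : ℕ} (hx : x ∈ H) (hy : 0 < y)
    (hyx : y ≡ x [MOD m]) (hle : y ≤ x) : y ∈ H := by
  induction x using Nat.strong_induction_on with
  | _ x ih =>
    rcases hle.eq_or_lt with rfl | hlt
    · exact hx
    have hdvd : m ∣ x - y := (Nat.modEq_iff_dvd' hle).mp hyx
    have hm : 0 < m := Nat.pos_of_ne_zero fun hm => by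
      rw [hm, Nat.zero_dvd] at hdvd
      omega
    have hmx : m ≤ x - y := Nat.le_of_dvd (by omega) hdvd
    have hxm : x - m ∈ H := hH.2 x hx (by omega)
    exact ih (x - m) (by omega) hxm ((Nat.modEq_sub_modulus_iff (by omega)).mpr hyx) (by omega)

theorem sFun_le (hH : IsFlush m H) {g : ℕ} (hg : g ∉ H) : sFun m H (g % m) ≤ g := by
  refine max'_le _ _ _ fun s hs => ?_
  obtain rfl | hs := mem_insert.mp hs
  · exact Nat.mod_le g m
  obtain ⟨h, hhf, rfl⟩ := mem_image.mp hs
  obtain ⟨hh, hhg⟩ := mem_filter.mp hhf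
  replace hhg : h ≡ g [MOD m] := hhg.trans (Nat.mod_mod g m)
  have hhg' : h < g := by
    refine lt_of_le_of_ne (not_lt.mp fun hgh => ?_) fun hgh => hg (hgh ▸ hh)
    rcases Nat.eq_zero_or_pos g with rfl | hg0
    · exact hH.1 h hh (Nat.modEq_zero_iff_dvd.mp hhg)
    · exact hg (hH.mem_of_modEq hh hg0 hhg.symm hgh.le)
  by_contra! hlt
  exact hhg'.not_ge (hhg.symm.le_of_lt_add hlt)

theorem card_gaps_eq_card_sSet_lt (hm : 0 < m) (hH : IsFlush m H) {h : ℕ} (hh : h ∈ H) :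
    #{g ∈ range h | g ∉ H ∧ h < g + m} = #{s ∈ sSet m H | s < h} := by
  refine card_bij (fun g _ => sFun m H (g % m)) (fun g hg => ?_)
    (fun g₁ hg₁ g₂ hg₂ heq => ?_) fun s hs => ?_
  · obtain ⟨hgh, hgH, -⟩ : g < h ∧ g ∉ H ∧ h < g + m := by simpa using hg
    exact mem_filter.mpr ⟨mem_image_of_mem _ (mem_range.mpr (Nat.mod_lt g hm)),
      (hH.sFun_le hgH).trans_lt hgh⟩
  · simp only [mem_filter, mem_range] at hg₁ hg₂
    have hmod : g₁ ≡ g₂ [MOD m] := by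
      rw [Nat.ModEq, ← sFun_mod (H := H) (Nat.mod_lt g₁ hm), heq, sFun_mod (Nat.mod_lt g₂ hm)]
    exact le_antisymm (hmod.le_of_lt_add (by omega)) (hmod.symm.le_of_lt_add (by omega))
  · obtain ⟨hs, hsh⟩ := mem_filter.mp hs
    obtain ⟨r, hr, rfl⟩ := mem_image.mp hs
    rw [mem_range] at hr
    obtain ⟨g, hgr, hgh, hhg⟩ := Nat.exists_modEq_lt_le_add hm ((le_sFun r).trans_lt hsh)
    have hgH : g ∉ H := fun hgH => by
      have := add_le_sFun hgH hgr
      omega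
    have hhg' : h < g + m := by
      refine lt_of_le_of_ne hhg fun hgm => ?_
      have hhr : h ≡ r [MOD m] := by rw [hgm]; exact Nat.add_modulus_modEq_iff.mpr hgr
      have := add_le_sFun hh hhr
      omega
    refine ⟨g, mem_filter.mpr ⟨mem_range.mpr hgh, hgH, hhg'⟩, ?_⟩
    rw [show g % m = r from Eq.trans hgr (Nat.mod_eq_of_lt hr)]

end IsFlush

theorem boundary_cells_count_general (m : ℕ) (hm : 0 < m) (L : List ℕ) (hL : IsPartition L)
    (hmc : IsCore m L) (i : ℕ) (hi : i < L.length) :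
    ((Finset.range (L.getD i 0)).filter (fun j => hook L i j < m)).card =
      ((sSet m (firstColHooks L)).filter (fun s => s < hook L i 0)).card := by
  have hh : hook L i 0 ∈ firstColHooks L := mem_firstColHooks.mpr ⟨i, hi, rfl⟩
  calc #{j ∈ range (L.getD i 0) | hook L i j < m}
      = #{j ∈ range (L.getD i 0) | hook L i 0 < coHook L i j + m} := by
        congr 1
        refine filter_congr fun j hj => ?_
        have := hook_add_coHook hL (mem_range.mp hj).le
        omega
    _ = #{g ∈ (range (L.getD i 0)).image (coHook L i) | hook L i 0 < g + m} := by
        rw [filter_image, card_image_of_injective _ (coHook_strictMono L i).injective]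
    _ = #{g ∈ range (hook L i 0) | g ∉ firstColHooks L ∧ hook L i 0 < g + m} := by
        rw [image_coHook hL hi, filter_filter]
    _ = #{s ∈ sSet m (firstColHooks L) | s < hook L i 0} :=
        (isFlush_firstColHooks hm hL hmc).card_gaps_eq_card_sSet_lt hm hh

/-- For an `(m,n)`-core `λ` with first-column hook lengths `H`,
the number of cells in row `i` with hook length `< m` equals the number of
elements of `S^m(H)` smaller than `h_i`. -/
theorem boundary_cells_count (m n : ℕ) (hm : 0 < m) (hn : 0 < n)
    (hco : Nat.Coprime m n) (L : List ℕ) (hL : IsPartition L)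
    (hmc : IsCore m L) (hnc : IsCore n L) (i : ℕ) (hi : i < L.length) :
    ((Finset.range (L.getD i 0)).filter (fun j => hook L i j < m)).card =
      ((sSet m (firstColHooks L)).filter (fun s => s < hook L i 0)).card :=
  boundary_cells_count_general m hm L hL hmc i hi
end
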